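/- arXiv:2605.12268 — 6 statements merged into one kernel-verified Lean document; each statement's English description precedes it below -/
import Mathlib

section
/- Over the rationals, the quadratic form with Gram matrix A_d orthogonally summed with the rank-one form ⟨d+1⟩ is isometric to the (d+1)-fold orthogonal sum of ⟨1⟩, i.e. A_d ⊥ ⟨d+1⟩ ≃ (d+1)·⟨1⟩. -/
/-!
Writing `𝟙` for the all-ones vector, `A_d = I + 𝟙𝟙ᵀ`. The bordered matrix `Q = [[I, 𝟙], [-𝟙ᵀ, 1]]`
satisfies `Q Qᵀ = A_d ⊕ (1 + 𝟙ᵀ𝟙) = A_d ⊕ (d + 1)` and `det Q = d + 1 ≠ 0`, so `P = (Qᵀ)⁻¹`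
turns `A_d ⊕ (d + 1)` into the identity.
-/

/-- `A d` is the `d × d` matrix with `2`'s on the diagonal and `1`'s off the diagonal. -/
def simplexGram (d : ℕ) : Matrix (Fin d) (Fin d) ℚ :=
  Matrix.of fun i j => if i = j then 2 else 1

open Matrix

namespace Matrix

variable {n ι R : Type*} [Fintype n] [DecidableEq n] [Fintype ι] [DecidableEq ι] [CommRing R]

theorem exists_transpose_mul_mul_transpose_mul_eq_one {Q : Matrix n n R} (hQ : IsUnit Q.det) :
    ∃ P : Matrix n n R, IsUnit P.det ∧ Pᵀ * (Q * Qᵀ) * P = 1 := by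
  have hQt : IsUnit Qᵀ.det := by rwa [det_transpose]
  refine ⟨Qᵀ⁻¹, isUnit_nonsing_inv_det_iff.mpr hQt, ?_⟩
  rw [transpose_nonsing_inv, transpose_transpose, ← Matrix.mul_assoc, nonsing_inv_mul _ hQ,
    Matrix.one_mul, mul_nonsing_inv _ hQt]

variable [Unique ι]

def borderedIdentity (u : n → R) : Matrix (n ⊕ ι) (n ⊕ ι) R :=
  fromBlocks 1 (replicateCol ι u) (-replicateRow ι u) 1

theorem borderedIdentity_mul_transpose (u : n → R) :
    borderedIdentity (ι := ι) u * (borderedIdentity u)ᵀ =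
      fromBlocks (1 + vecMulVec u u) 0 0 (of fun _ _ => u ⬝ᵥ u + 1) := by
  have h_unique : (of fun _ _ => u ⬝ᵥ u) + (1 : Matrix ι ι R) = of fun _ _ => u ⬝ᵥ u + 1 := by
    ext i j
    simp [Subsingleton.elim i j]
  have h_col_row : replicateCol ι u * replicateRow ι u = vecMulVec u u := by
    convert (vecMulVec_eq ι u u).symm
  rw [borderedIdentity, fromBlocks_transpose, fromBlocks_multiply]
  simp only [transpose_one, transpose_neg, transpose_replicateCol, transpose_replicateRow,
    Matrix.one_mul, Matrix.mul_one, Matrix.mul_neg, Matrix.neg_mul, neg_neg,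
    neg_add_cancel, replicateRow_mul_replicateCol, h_unique, h_col_row]

theorem det_borderedIdentity (u : n → R) :
    (borderedIdentity (ι := ι) u).det = 1 + u ⬝ᵥ u := by
  rw [borderedIdentity, det_fromBlocks_one₁₁, Matrix.neg_mul, sub_neg_eq_add,
    replicateRow_mul_replicateCol, det_unique]
  simp

end Matrix

theorem simplexGram_eq_one_add_vecMulVec (d : ℕ) : simplexGram d = 1 + vecMulVec 1 1 := by
  ext i j
  by_cases h : i = j <;> simp [simplexGram, one_apply, h, one_add_one_eq_two]

/-- Over `ℚ`, `A_d ⊥ ⟨d+1⟩ ≃ (d+1)·⟨1⟩`, expressed as a congruence of Gram matrices. -/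
theorem simplexGram_perp_rankOne (d : ℕ) :
    ∃ P : Matrix (Fin d ⊕ Fin 1) (Fin d ⊕ Fin 1) ℚ, IsUnit P.det ∧
      P.transpose *
        Matrix.fromBlocks (simplexGram d) 0 0 (Matrix.of fun _ _ => ((d : ℚ) + 1)) * P =
      1 := by
  have hdot : (1 : Fin d → ℚ) ⬝ᵥ 1 = d := by simp
  have hdet : IsUnit (borderedIdentity (ι := Fin 1) (1 : Fin d → ℚ)).det := by
    rw [det_borderedIdentity, hdot, isUnit_iff_ne_zero]
    positivity
  obtain ⟨P, hP, hPQ⟩ := exists_transpose_mul_mul_transpose_mul_eq_one hdet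
  refine ⟨P, hP, ?_⟩
  rw [borderedIdentity_mul_transpose, hdot] at hPQ
  rw [simplexGram_eq_one_add_vecMulVec]
  exact hPQ
end

section
/- Let 1 ≤ d ≤ n, let m ∈ ℚ_{>0}, and set a = m/2. There exist affinely independent points v₀,…,v_d ∈ ℚⁿ with all pairwise squared Euclidean distances equal to m if and only if there exists a positive definite rational quadratic form r of rank n−d (the zero-dimensional form if n = d) such that aA_d ⊥ r ≃ n·⟨1⟩ over ℚ. -/
/-- A regular `d`-simplex in `ℚⁿ` of squared edge length `m`. -/
def IsRegularSimplex (d n : ℕ) (m : ℚ) (v : Fin (d + 1) → Fin n → ℚ) : Prop :=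
  AffineIndependent ℚ v ∧ ∀ i j, i ≠ j → ∑ k, (v i k - v j k) ^ 2 = m

open Matrix Module

theorem Module.Basis.sumExtend_apply_inl {K V ι : Type*} [DivisionRing K] [AddCommGroup V]
    [Module K V] {v : ι → V} (hv : LinearIndependent K v) (i : ι) :
    Basis.sumExtend hv (Sum.inl i) = v i := by
  rw [Basis.sumExtend, Basis.reindex_apply, Basis.coe_extend]
  rfl

theorem LinearIndependent.exists_linearIndependent_sum_elim {K V ι κ : Type*} [DivisionRing K]
    [AddCommGroup V] [Module K V] [FiniteDimensional K V] [Finite κ] {v : ι → V}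
    (hv : LinearIndependent K v) (hV : finrank K V = Nat.card ι + Nat.card κ) :
    ∃ w : κ → V, LinearIndependent K (Sum.elim v w) := by
  let b := Basis.sumExtend hv
  have : Finite (ι ⊕ Basis.sumExtendIndex hv) := Module.Finite.finite_basis b
  have : Finite ι := .sum_left (Basis.sumExtendIndex hv)
  have : Finite (Basis.sumExtendIndex hv) := .sum_right ι
  have hcard : Nat.card κ = Nat.card (Basis.sumExtendIndex hv) := by
    have := finrank_eq_nat_card_basis b
    rw [Nat.card_sum] at this
    omega
  obtain ⟨e⟩ := Finite.card_eq.mp hcard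
  refine ⟨b ∘ Sum.inr ∘ e, ?_⟩
  have hb : b ∘ Sum.map id e = Sum.elim v (b ∘ Sum.inr ∘ e) := by
    ext (i | i) : 1
    · exact Basis.sumExtend_apply_inl hv i
    · rfl
  rw [← hb]
  exact b.linearIndependent.comp _ (Sum.map_injective.mpr ⟨Function.injective_id, e.injective⟩)

namespace Matrix

section CommRing

variable {R ι : Type*} [CommRing R] [Fintype ι]

theorem sub_dotProduct_sub_self (x y : ι → R) :
    (x - y) ⬝ᵥ (x - y) = x ⬝ᵥ x + y ⬝ᵥ y - 2 * (x ⬝ᵥ y) := by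
  simp only [sub_dotProduct, dotProduct_sub, dotProduct_comm y x]
  ring

theorem exists_isUnit_det_transpose_mul_mul_eq_one_iff [DecidableEq ι] (M : Matrix ι ι R) :
    (∃ P : Matrix ι ι R, IsUnit P.det ∧ Pᵀ * M * P = 1) ↔
      ∃ Q : Matrix ι ι R, IsUnit Q.det ∧ Q * Qᵀ = M := by
  constructor
  · rintro ⟨P, hP, hPMP⟩
    refine ⟨P⁻¹ᵀ, by rwa [det_transpose, isUnit_nonsing_inv_det_iff], ?_⟩
    calc P⁻¹ᵀ * P⁻¹ᵀᵀ = P⁻¹ᵀ * (Pᵀ * M * P) * P⁻¹ := by rw [hPMP, mul_one, transpose_transpose]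
      _ = (P * P⁻¹)ᵀ * M * (P * P⁻¹) := by simp only [transpose_mul, Matrix.mul_assoc]
      _ = M := by rw [mul_nonsing_inv _ hP, transpose_one, Matrix.one_mul, Matrix.mul_one]
  · rintro ⟨Q, hQ, rfl⟩
    refine ⟨Q⁻¹ᵀ, by rwa [det_transpose, isUnit_nonsing_inv_det_iff], ?_⟩
    calc Q⁻¹ᵀᵀ * (Q * Qᵀ) * Q⁻¹ᵀ = (Q⁻¹ * Q) * (Q⁻¹ * Q)ᵀ := by
          simp only [transpose_mul, transpose_transpose, Matrix.mul_assoc]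
      _ = 1 := by rw [nonsing_inv_mul _ hQ, transpose_one, Matrix.one_mul]

end CommRing

section Field

variable {K ι κ : Type*} [Field K]

theorem exists_linearIndependent_mul_transpose_eq_congr {α β : Type*} [Fintype α] [Fintype β]
    (e : α ≃ β) (G : Matrix ι ι K) :
    (∃ U : Matrix ι α K, LinearIndependent K U.row ∧ U * Uᵀ = G) ↔
      ∃ U : Matrix ι β K, LinearIndependent K U.row ∧ U * Uᵀ = G := by
  refine (reindex (Equiv.refl ι) e).exists_congr fun U => and_congr ?_ ?_
  · exact ((LinearEquiv.funCongrLeft K K e.symm).toLinearMap.linearIndependent_iff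
      (LinearEquiv.ker _)).symm
  · rw [reindex_apply, transpose_submatrix, submatrix_mul_equiv, Equiv.refl_symm,
      Equiv.coe_refl, submatrix_id_id]

theorem exists_isUnit_fromRows [Fintype ι] [Fintype κ] [DecidableEq ι] [DecidableEq κ]
    {U : Matrix ι (ι ⊕ κ) K} (hU : LinearIndependent K U.row) :
    ∃ X : Matrix κ (ι ⊕ κ) K, IsUnit (fromRows U X) := by
  obtain ⟨X, hX⟩ := hU.exists_linearIndependent_sum_elim (κ := κ) (by simp)
  exact ⟨X, linearIndependent_rows_iff_isUnit.mp hX⟩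

end Field

section OrderedField

variable {K ι κ : Type*} [Field K] [PartialOrder K] [StarRing K] [TrivialStar K]
  [StarOrderedRing K] [Fintype ι] [Fintype κ]

theorem posDef_mul_transpose_self {σ : Type*} [Fintype σ] {U : Matrix ι σ K}
    (hU : LinearIndependent K U.row) : (U * Uᵀ).PosDef := by
  simpa only [conjTranspose_eq_transpose_of_trivial] using
    PosDef.mul_conjTranspose_self U (vecMul_injective_iff.mpr hU)

variable [DecidableEq ι] [DecidableEq κ]

theorem exists_isUnit_fromRows_mul_transpose_eq_zero {U : Matrix ι (ι ⊕ κ) K}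
    (hU : LinearIndependent K U.row) :
    ∃ X : Matrix κ (ι ⊕ κ) K, IsUnit (fromRows U X) ∧ X * Uᵀ = 0 := by
  obtain ⟨X, hX⟩ := exists_isUnit_fromRows hU
  have hG : IsUnit (U * Uᵀ).det :=
    (isUnit_iff_isUnit_det _).mp (posDef_mul_transpose_self hU).isUnit
  -- subtract from the rows of `X` their orthogonal projections onto the row space of `U`
  set C := X * Uᵀ * (U * Uᵀ)⁻¹
  refine ⟨X - C * U, ?_, ?_⟩
  · have hL : IsUnit (fromBlocks 1 0 (-C) 1 : Matrix (ι ⊕ κ) (ι ⊕ κ) K) := by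
      simp [isUnit_iff_isUnit_det]
    convert hL.mul hX using 1
    rw [fromBlocks_mul_fromRows]
    simp [sub_eq_neg_add, Matrix.neg_mul]
  · rw [Matrix.sub_mul, Matrix.mul_assoc C, nonsing_inv_mul_cancel_right _ _ hG, sub_self]

theorem exists_linearIndependent_mul_transpose_eq_iff_exists_posDef (G : Matrix ι ι K) :
    (∃ U : Matrix ι (ι ⊕ κ) K, LinearIndependent K U.row ∧ U * Uᵀ = G) ↔
      ∃ r : Matrix κ κ K, r.PosDef ∧
        ∃ Q : Matrix (ι ⊕ κ) (ι ⊕ κ) K, IsUnit Q.det ∧ Q * Qᵀ = fromBlocks G 0 0 r := by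
  constructor
  · rintro ⟨U, hU, rfl⟩
    obtain ⟨X, hQ, hXU⟩ := exists_isUnit_fromRows_mul_transpose_eq_zero hU
    have hX : LinearIndependent K X.row :=
      (linearIndependent_rows_of_isUnit hQ).comp Sum.inr Sum.inr_injective
    have hUX : U * Xᵀ = 0 := by
      rw [← transpose_transpose U, ← transpose_mul, hXU, transpose_zero]
    refine ⟨X * Xᵀ, posDef_mul_transpose_self hX, fromRows U X,
      (isUnit_iff_isUnit_det _).mp hQ, ?_⟩
    rw [transpose_fromRows, fromRows_mul_fromCols, hXU, hUX]
  · rintro ⟨r, -, Q, hQ, hQQ⟩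
    rw [← fromRows_toRows Q, transpose_fromRows, fromRows_mul_fromCols] at hQQ
    exact ⟨Q.toRows₁, (linearIndependent_rows_of_isUnit ((isUnit_iff_isUnit_det _).mpr hQ)).comp
      Sum.inl Sum.inl_injective, (fromBlocks_inj.mp hQQ).1⟩

end OrderedField

end Matrix

theorem isRegularSimplex_iff {d n : ℕ} {m : ℚ} {v : Fin (d + 1) → Fin n → ℚ} :
    IsRegularSimplex d n m v ↔
      LinearIndependent ℚ (fun i : Fin d => v i.succ - v 0) ∧
        ∀ i j, (v i.succ - v 0) ⬝ᵥ (v j.succ - v 0) = ((m / 2) • simplexGram d) i j := by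
  have hsq : ∀ i j, ∑ k, (v i k - v j k) ^ 2 = (v i - v j) ⬝ᵥ (v i - v j) := fun i j => by
    simp only [dotProduct, Pi.sub_apply, sq]
  have hsucc : ∀ i j : Fin d, v i.succ - v j.succ = (v i.succ - v 0) - (v j.succ - v 0) :=
    fun i j => (sub_sub_sub_cancel_right _ _ _).symm
  have hgram : ∀ i j : Fin d, ((m / 2) • simplexGram d) i j = if i = j then m else m / 2 := by
    intro i j; split_ifs with h <;> simp [simplexGram, h]
  rw [IsRegularSimplex, affineIndependent_iff_linearIndependent_vsub ℚ v 0,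
    ← linearIndependent_equiv (finSuccAboveEquiv 0)]
  refine and_congr Iff.rfl ⟨fun h i j => ?_, fun h i j hij => ?_⟩
  · rw [hgram]
    have hi := h i.succ 0 (Fin.succ_ne_zero i)
    split_ifs with hij
    · subst hij; rwa [hsq] at hi
    · have hj := h j.succ 0 (Fin.succ_ne_zero j)
      have hij' := h i.succ j.succ ((Fin.succ_injective _).ne hij)
      rw [hsq] at hi hj hij'
      rw [hsucc, sub_dotProduct_sub_self] at hij'
      linarith
  · rw [hsq]
    have hnorm : ∀ i : Fin d, (v i.succ - v 0) ⬝ᵥ (v i.succ - v 0) = m := fun i => by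
      rw [h, hgram, if_pos rfl]
    induction i using Fin.cases with
    | zero =>
      induction j using Fin.cases with
      | zero => exact absurd rfl hij
      | succ j => rw [← neg_sub, neg_dotProduct_neg, hnorm]
    | succ i =>
      induction j using Fin.cases with
      | zero => exact hnorm i
      | succ j =>
        have hij : i ≠ j := fun h => hij (congrArg Fin.succ h)
        rw [hsucc, sub_dotProduct_sub_self, hnorm, hnorm, h, hgram, if_neg hij]
        ring

theorem exists_isRegularSimplex_iff {d n : ℕ} {m : ℚ} :
    (∃ v, IsRegularSimplex d n m v) ↔
      ∃ U : Matrix (Fin d) (Fin n) ℚ, LinearIndependent ℚ U.row ∧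
        U * Uᵀ = (m / 2) • simplexGram d := by
  simp only [isRegularSimplex_iff]
  constructor
  · rintro ⟨v, hv, hgram⟩
    exact ⟨of fun i => v i.succ - v 0, hv, ext hgram⟩
  · rintro ⟨U, hU, hgram⟩
    let v : Fin (d + 1) → Fin n → ℚ := Fin.cons 0 fun i => U i
    have hv : ∀ i : Fin d, v i.succ - v 0 = U i := fun i => by simp [v]
    refine ⟨v, ?_⟩
    simp only [hv]
    exact ⟨hU, fun i j => by rw [← hgram]; rfl⟩

theorem simplex_iff_complement_general (d n : ℕ) (hdn : d ≤ n) (m : ℚ) :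
    (∃ v : Fin (d + 1) → Fin n → ℚ, IsRegularSimplex d n m v) ↔
      ∃ r : Matrix (Fin (n - d)) (Fin (n - d)) ℚ, r.PosDef ∧
        ∃ P : Matrix (Fin d ⊕ Fin (n - d)) (Fin d ⊕ Fin (n - d)) ℚ, IsUnit P.det ∧
          P.transpose * Matrix.fromBlocks ((m / 2) • simplexGram d) 0 0 r * P = 1 := by
  simp only [exists_isUnit_det_transpose_mul_mul_eq_one_iff]
  rw [← exists_linearIndependent_mul_transpose_eq_iff_exists_posDef, exists_isRegularSimplex_iff]
  exact exists_linearIndependent_mul_transpose_eq_congr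
    ((finCongr (Nat.add_sub_cancel' hdn).symm).trans finSumFinEquiv.symm) _

/-- Reduction: `m ∈ S_ℚ(d,n)` iff there is a positive definite complement `r` of rank
`n - d` with `(m/2)·A_d ⊥ r ≃ n·⟨1⟩`. -/
theorem simplex_iff_complement (d n : ℕ) (hd : 1 ≤ d) (hdn : d ≤ n) (m : ℚ) (hm : 0 < m) :
    (∃ v : Fin (d + 1) → Fin n → ℚ, IsRegularSimplex d n m v) ↔
      ∃ r : Matrix (Fin (n - d)) (Fin (n - d)) ℚ, r.PosDef ∧
        ∃ P : Matrix (Fin d ⊕ Fin (n - d)) (Fin d ⊕ Fin (n - d)) ℚ, IsUnit P.det ∧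
          P.transpose * Matrix.fromBlocks ((m / 2) • simplexGram d) 0 0 r * P = 1 :=
  simplex_iff_complement_general d n hdn m
end

section
/- If d ≡ 2 (mod 4), then there is no regular d-simplex with vertices in ℚ^d; equivalently, for no m ∈ ℚ_{>0} do there exist d+1 points in ℚ^d with all pairwise squared distances equal to m. -/
/-!
The edge vectors `v (i + 1) - v 0` of a regular `d`-simplex of squared edge length `m` have
Gram matrix `(m / 2) (I + J)`, of determinant `(m / 2) ^ d (d + 1)`. In `ℚ^d` the matrix of edge
vectors is square, so this determinant is the square of a rational number. For even `d` this
makes `d + 1` a perfect square, which is impossible when `d + 1 ≡ 3 (mod 4)`.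
-/

open Matrix

section

variable {K ι : Type*} [Field K] [Fintype ι]

lemma dotProduct_eq_half_of_sum_sq_sub_eq [NeZero (2 : K)] {u w : ι → K} {m : K}
    (hu : ∑ k, u k ^ 2 = m) (hw : ∑ k, w k ^ 2 = m) (huw : ∑ k, (u k - w k) ^ 2 = m) :
    u ⬝ᵥ w = m / 2 := by
  have polarization : ∀ k, u k * w k = (u k ^ 2 + w k ^ 2 - (u k - w k) ^ 2) / 2 := fun k => by
    field_simp; ring
  rw [dotProduct, Finset.sum_congr rfl fun k _ => polarization k, ← Finset.sum_div,
    Finset.sum_sub_distrib, Finset.sum_add_distrib, hu, hw, huw]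
  ring

def edgeMatrix {d : ℕ} (v : Fin (d + 1) → ι → K) : Matrix (Fin d) ι K :=
  of fun i k => v i.succ k - v 0 k

lemma edgeMatrix_mul_transpose [NeZero (2 : K)] {d : ℕ} {m : K} {v : Fin (d + 1) → ι → K}
    (hv : ∀ i j, i ≠ j → ∑ k, (v i k - v j k) ^ 2 = m) :
    edgeMatrix v * (edgeMatrix v)ᵀ = (m / 2) • (1 + vecMulVec 1 1) := by
  have hsq (i : Fin d) : ∑ k, edgeMatrix v i k ^ 2 = m := hv _ _ i.succ_ne_zero
  ext i j
  change edgeMatrix v i ⬝ᵥ edgeMatrix v j = _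
  rw [Matrix.smul_apply, Matrix.add_apply, vecMulVec_apply]
  rcases eq_or_ne i j with rfl | hij
  · rw [one_apply_eq, Pi.one_apply, mul_one, one_add_one_eq_two, smul_eq_mul,
      div_mul_cancel₀ _ two_ne_zero, ← hsq i]
    simp only [dotProduct, sq]
  · rw [one_apply_ne hij, dotProduct_eq_half_of_sum_sq_sub_eq (hsq i) (hsq j)]
    · simp
    · simpa [edgeMatrix] using hv _ _ ((Fin.succ_injective _).ne hij)

lemma det_smul_one_add_vecMulVec_one_one (d : ℕ) (a : K) :
    det (a • (1 + vecMulVec (1 : Fin d → K) 1)) = a ^ d * (d + 1) := by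
  rw [det_smul, vecMulVec_eq Unit, det_one_add_replicateCol_mul_replicateRow, Fintype.card_fin,
    add_comm (1 : K)]
  simp

end

lemma isSquare_det_mul_transpose {R n : Type*} [CommRing R] [Fintype n] [DecidableEq n]
    (M : Matrix n n R) : IsSquare (det (M * Mᵀ)) :=
  ⟨M.det, by rw [det_mul, det_transpose]⟩

lemma IsSquare.of_pow_mul {K : Type*} [Field K] {a x : K} {d : ℕ} (ha : a ≠ 0) (hd : Even d)
    (h : IsSquare (a ^ d * x)) : IsSquare x := by
  simpa [ha] using h.div (hd.isSquare_pow a)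

lemma Nat.not_isSquare_of_mod_four_eq_three {n : ℕ} (hn : n % 4 = 3) : ¬ IsSquare n := by
  rintro ⟨r, rfl⟩
  have hmul := Nat.mul_mod r r 4
  have hlt : r % 4 < 4 := Nat.mod_lt _ (by norm_num)
  interval_cases r % 4 <;> omega

/-- If `d ≡ 2 (mod 4)`, there is no regular `d`-simplex with vertices in `ℚ^d`. -/
theorem no_simplex_codim_zero_two_mod_four (d : ℕ) (hd : d % 4 = 2) :
    ¬ ∃ (m : ℚ) (v : Fin (d + 1) → Fin d → ℚ), 0 < m ∧ IsRegularSimplex d d m v := by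
  rintro ⟨m, v, hm, -, hv⟩
  have hgram : IsSquare ((m / 2) ^ d * (d + 1)) := by
    rw [← det_smul_one_add_vecMulVec_one_one, ← edgeMatrix_mul_transpose hv]
    exact isSquare_det_mul_transpose _
  have hsucc : IsSquare ((d + 1 : ℕ) : ℚ) := by
    exact_mod_cast hgram.of_pow_mul (by positivity) (Nat.even_iff.mpr (by omega : d % 2 = 0))
  exact Nat.not_isSquare_of_mod_four_eq_three (by omega) (Rat.isSquare_natCast_iff.mp hsucc)
end

section
/- If d ≡ 3 (mod 4) and n ≥ d + 1, then every positive rational m occurs as the squared edge length of a regular d-simplex with vertices in ℚⁿ. -/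
open Matrix
open scoped Kronecker

theorem Rat.sum_four_squares {q : ℚ} (hq : 0 ≤ q) :
    ∃ a b c e : ℚ, a ^ 2 + b ^ 2 + c ^ 2 + e ^ 2 = q := by
  obtain ⟨a, b, c, e, h⟩ := Nat.sum_four_squares (q.num.toNat * q.den)
  have hden : (q.den : ℚ) ≠ 0 := by positivity
  have hnum : ((q.num.toNat : ℕ) : ℚ) = q.num := by
    exact_mod_cast Int.toNat_of_nonneg (Rat.num_nonneg.mpr hq)
  have h' : (a : ℚ) ^ 2 + b ^ 2 + c ^ 2 + e ^ 2 = q.num * q.den := by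
    rw [← hnum]
    exact_mod_cast h
  refine ⟨a / q.den, b / q.den, c / q.den, e / q.den, ?_⟩
  rw [div_pow, div_pow, div_pow, div_pow, ← add_div, ← add_div, ← add_div, h', sq,
    mul_div_mul_right _ _ hden, Rat.num_div_den]

section CommRing

variable {R : Type*} [CommRing R]

/-- Its rows are `x, i x, j x, k x` for the quaternion `x = a + b i + c j + e k`. -/
def quaternionMatrix (a b c e : R) : Matrix (Fin 4) (Fin 4) R :=
  !![a, b, c, e; -b, a, -e, c; -c, e, a, -b; -e, -c, b, a]

theorem quaternionMatrix_mul_transpose (a b c e : R) :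
    quaternionMatrix a b c e * (quaternionMatrix a b c e)ᵀ =
      (a ^ 2 + b ^ 2 + c ^ 2 + e ^ 2) • 1 := by
  ext i j
  fin_cases i <;> fin_cases j <;> simp [quaternionMatrix, mul_apply, Fin.sum_univ_four] <;> ring

theorem exists_mul_transpose_eq_smul_one_of_four_dvd {ι : Type*} [Fintype ι] [DecidableEq ι]
    (h4 : 4 ∣ Fintype.card ι) (a b c e : R) :
    ∃ V : Matrix ι ι R, V * Vᵀ = (a ^ 2 + b ^ 2 + c ^ 2 + e ^ 2) • 1 := by
  obtain ⟨r, hr⟩ := h4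
  let σ : ι ≃ Fin 4 × Fin r := (Fintype.equivFinOfCardEq hr).trans finProdFinEquiv.symm
  refine ⟨(quaternionMatrix a b c e ⊗ₖ (1 : Matrix (Fin r) (Fin r) R)).submatrix σ σ, ?_⟩
  rw [transpose_submatrix, submatrix_mul_equiv, ← kroneckerMap_transpose, ← mul_kronecker_mul,
    quaternionMatrix_mul_transpose, transpose_one, one_mul, smul_kronecker, one_kronecker_one,
    ← submatrix_one_equiv (α := R) σ]
  rfl

theorem exists_mul_transpose_eq_of_embedding {ι κ κ' : Type*} [Fintype κ] [Fintype κ']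
    (V : Matrix ι κ R) (e : κ ↪ κ') : ∃ W : Matrix ι κ' R, W * Wᵀ = V * Vᵀ := by
  classical
  let P : Matrix κ κ' R := (1 : Matrix κ' κ' R).submatrix e id
  have hP : P * Pᵀ = 1 := by
    rw [transpose_submatrix, transpose_one, ← submatrix_mul _ _ _ _ _ Function.bijective_id,
      one_mul, submatrix_one_embedding]
  exact ⟨V * P, by rw [transpose_mul, Matrix.mul_assoc, ← Matrix.mul_assoc P, hP, Matrix.one_mul]⟩

end CommRing

section Orthogonal

variable {ι κ : Type*} [Fintype κ] [DecidableEq ι]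

theorem linearIndependent_rows_of_mul_transpose_eq_smul_one {K : Type*} [Field K] [Fintype ι]
    {V : Matrix ι κ K} {μ : K} (hμ : μ ≠ 0) (hV : V * Vᵀ = μ • 1) :
    LinearIndependent K V.row := by
  rw [← vecMul_injective_iff, ← coe_vecMulLinear, ← LinearMap.ker_eq_bot, LinearMap.ker_eq_bot']
  intro w hw
  have : μ • w = 0 := calc
    μ • w = w ᵥ* (V * Vᵀ) := by rw [hV, vecMul_smul, vecMul_one]
    _ = 0 := by rw [← vecMul_vecMul, show w ᵥ* V = 0 from hw, zero_vecMul]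
  exact (smul_eq_zero.mp this).resolve_left hμ

theorem sum_sub_sq_eq_of_mul_transpose_eq_smul_one {R : Type*} [CommRing R] {V : Matrix ι κ R}
    {μ : R} (hV : V * Vᵀ = μ • 1) {i j : ι} (hij : i ≠ j) :
    ∑ k, (V i k - V j k) ^ 2 = 2 * μ := by
  have hdot (i j : ι) : V i ⬝ᵥ V j = if i = j then μ else 0 := by
    simpa [mul_apply, dotProduct, one_apply] using congrFun (congrFun hV i) j
  calc ∑ k, (V i k - V j k) ^ 2 = (V i - V j) ⬝ᵥ (V i - V j) := by simp [dotProduct, sq]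
    _ = V i ⬝ᵥ V i - 2 * V i ⬝ᵥ V j + V j ⬝ᵥ V j := by
        simp only [sub_dotProduct, dotProduct_sub, dotProduct_comm (V j) (V i)]
        ring
    _ = 2 * μ := by simp [hdot, hij]; ring

end Orthogonal

theorem isRegularSimplex_of_mul_transpose_eq_smul_one {d n : ℕ} {m : ℚ} (hm : m ≠ 0)
    {V : Matrix (Fin (d + 1)) (Fin n) ℚ} (hV : V * Vᵀ = (m / 2) • 1) :
    IsRegularSimplex d n m V :=
  ⟨(linearIndependent_rows_of_mul_transpose_eq_smul_one (by simpa using hm) hV).affineIndependent,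
    fun _ _ hij => by rw [sum_sub_sq_eq_of_mul_transpose_eq_smul_one hV hij]; ring⟩

/-- For `d ≡ 3 (mod 4)` and `n ≥ d + 1`, every positive rational occurs as a squared
edge length of a regular `d`-simplex in `ℚⁿ`. -/
theorem codim_one_three_mod_four (d n : ℕ) (hd : d % 4 = 3) (hn : d + 1 ≤ n)
    (m : ℚ) (hm : 0 < m) :
    ∃ v : Fin (d + 1) → Fin n → ℚ, IsRegularSimplex d n m v := by
  obtain ⟨a, b, c, e, habce⟩ := Rat.sum_four_squares (half_pos hm).le
  obtain ⟨V, hV⟩ := exists_mul_transpose_eq_smul_one_of_four_dvd (ι := Fin (d + 1))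
    (by rw [Fintype.card_fin]; omega) a b c e
  obtain ⟨W, hW⟩ := exists_mul_transpose_eq_of_embedding V (Fin.castLEEmb hn)
  exact ⟨W, isRegularSimplex_of_mul_transpose_eq_smul_one hm.ne' (by rw [hW, hV, habce])⟩
end

section
/- There exists a regular 4-simplex of squared edge length 10 with vertices in ℚ⁵; explicitly, the origin together with the rows of the matrix W = [[1,3,0,0,0],[2,1,1,0,2],[2,1,−2,0,1],[5/4,5/4,−1/4,5/2,3/4]] gives 5 points of ℚ⁵ with all pairwise squared distances equal to 10. -/
/-!
Equilateral point sets are automatically affinely independent: if all squared distances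
equal `d ≠ 0`, then the edge vectors from one vertex have Gram matrix `(d / 2) (I + J)`,
which is nonsingular in characteristic zero. So it only remains to check that the five
given points are pairwise at squared distance `10`.
-/

/-- The five vertices: the origin together with the rows of
`W = [[1,3,0,0,0],[2,1,1,0,2],[2,1,-2,0,1],[5/4,5/4,-1/4,5/2,3/4]]`. -/
def exVerts : Fin 5 → Fin 5 → ℚ :=
  ![![0, 0, 0, 0, 0],
    ![1, 3, 0, 0, 0],
    ![2, 1, 1, 0, 2],
    ![2, 1, -2, 0, 1],
    ![5/4, 5/4, -1/4, 5/2, 3/4]]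

open Finset Matrix

section Equilateral

variable {K ι m : Type*} [Field K] [CharZero K] [Fintype m]

theorem linearIndependent_of_dotProduct_eq {v : ι → m → K} {c : K} (hc : c ≠ 0)
    (hself : ∀ i, v i ⬝ᵥ v i = 2 * c) (hne : ∀ i j, i ≠ j → v i ⬝ᵥ v j = c) :
    LinearIndependent K v := by
  classical
  rw [linearIndependent_iff']
  intro s g hg
  set S := ∑ i ∈ s, g i
  -- Pairing the relation with `v j` gives `c * (g j + S) = 0`.
  have hcoord : ∀ j ∈ s, g j = -S := by
    intro j hj
    have hdot : ∑ i ∈ s, g i * (v i ⬝ᵥ v j) = c * (g j + S) := by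
      have hgram : ∀ i, v i ⬝ᵥ v j = c + if i = j then c else 0 := by
        intro i
        split_ifs with hij
        · rw [hij, hself]; ring
        · rw [hne i j hij, add_zero]
      simp only [hgram, mul_add, mul_ite, mul_zero, sum_add_distrib, sum_ite_eq', if_pos hj,
        ← sum_mul, S]
      ring
    have hzero : ∑ i ∈ s, g i * (v i ⬝ᵥ v j) = 0 := by
      simpa only [sum_dotProduct, smul_dotProduct, smul_eq_mul, zero_dotProduct] using
        congrArg (· ⬝ᵥ v j) hg
    exact eq_neg_of_add_eq_zero_left ((mul_eq_zero.mp (hdot.symm.trans hzero)).resolve_left hc)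
  have hS : S = 0 := by
    have hsum : S = #s * -S := by
      rw [← nsmul_eq_mul, ← sum_const]
      exact sum_congr rfl hcoord
    have : ((#s : K) + 1) * S = 0 := by linear_combination hsum
    exact (mul_eq_zero.mp this).resolve_left (Nat.cast_add_one_ne_zero _)
  intro j hj
  rw [hcoord j hj, hS, neg_zero]

theorem affineIndependent_of_sq_dist_eq {p : ι → m → K} {d : K} (hd : d ≠ 0)
    (hp : ∀ i j, i ≠ j → ∑ k, (p i k - p j k) ^ 2 = d) : AffineIndependent K p := by
  rcases isEmpty_or_nonempty ι with _ | ⟨⟨i₀⟩⟩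
  · exact affineIndependent_of_subsingleton K p
  rw [affineIndependent_iff_linearIndependent_vsub K p i₀]
  have hpolar : ∀ i j, (p i - p i₀) ⬝ᵥ (p j - p i₀) =
      (∑ k, (p i k - p i₀ k) ^ 2 + ∑ k, (p j k - p i₀ k) ^ 2 - ∑ k, (p i k - p j k) ^ 2) / 2 := by
    intro i j
    rw [← sum_add_distrib, ← sum_sub_distrib, sum_div]
    exact sum_congr rfl fun k _ ↦ by simp only [Pi.sub_apply]; ring
  refine linearIndependent_of_dotProduct_eq (c := d / 2) (by simpa using hd) ?_ ?_
  · intro ⟨i, hi⟩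
    simp only [vsub_eq_sub, hpolar, hp i i₀ hi, sub_self, ne_eq, OfNat.ofNat_ne_zero,
      not_false_eq_true, zero_pow, sum_const_zero, sub_zero, add_self_div_two]
    ring
  · intro ⟨i, hi⟩ ⟨j, hj⟩ hij
    have hij : i ≠ j := fun h ↦ hij (Subtype.ext h)
    simp only [vsub_eq_sub, hpolar, hp i i₀ hi, hp j i₀ hj, hp i j hij]
    ring

end Equilateral

theorem exVerts_sq_dist (i j : Fin 5) (hij : i ≠ j) :
    ∑ k, (exVerts i k - exVerts j k) ^ 2 = 10 := by
  fin_cases i <;> fin_cases j <;> simp [exVerts, Fin.sum_univ_five] at hij ⊢ <;> norm_num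

/-- There is a regular `4`-simplex of squared edge length `10` in `ℚ⁵`, given explicitly
by `exVerts`. -/
theorem regular_four_simplex_in_Q5 :
    AffineIndependent ℚ exVerts ∧
      ∀ i j, i ≠ j → ∑ k, (exVerts i k - exVerts j k) ^ 2 = 10 :=
  ⟨affineIndependent_of_sq_dist_eq (by norm_num) exVerts_sq_dist, exVerts_sq_dist⟩
end

section
/- Let d, d' ≥ 1 with d ≤ d' and suppose the squarefree parts of d+1 and d'+1 are equal. Then over ℚ there is an isometry of quadratic forms A_{d'} ≃ A_d ⊥ (d'−d)·⟨1⟩. -/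
open Matrix

theorem exists_rat_sq_mul_eq_of_squarefree_part_eq {a b : ℕ} (ha : 0 < a) (hb : 0 < b)
    (h : ∀ s : ℕ, Squarefree s → ((∃ u : ℕ, a = s * u ^ 2) ↔ (∃ u : ℕ, b = s * u ^ 2))) :
    ∃ r : ℚ, 0 < r ∧ r ^ 2 * a = b := by
  obtain ⟨s, u, -, hu, rfl, hs⟩ := Nat.sq_mul_squarefree_of_pos ha
  obtain ⟨v, rfl⟩ := (h s hs).mp ⟨u, by ring⟩
  have hv : 0 < v := Nat.pos_of_ne_zero (by rintro rfl; simp at hb)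
  refine ⟨v / u, by positivity, ?_⟩
  field_simp
  push_cast
  ring

def onesMatrix (m n : Type*) (α : Type*) [One α] : Matrix m n α := of fun _ _ => 1

section onesMatrix

variable {l m n α : Type*}

theorem onesMatrix_mul_onesMatrix [Fintype m] [NonAssocSemiring α] :
    onesMatrix l m α * onesMatrix m n α = (Fintype.card m : α) • onesMatrix l n α := by
  ext i j
  simp [onesMatrix, mul_apply]

@[simp]
theorem transpose_onesMatrix [One α] : (onesMatrix m n α)ᵀ = onesMatrix n m α := rfl

theorem det_one_add_smul_onesMatrix [Fintype n] [DecidableEq n] [CommRing α] (b : α) :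
    det (1 + b • onesMatrix n n α) = 1 + b * Fintype.card n := by
  have : b • onesMatrix n n α =
      (replicateCol Unit (fun _ => b) : Matrix n Unit α) *
        replicateRow Unit (fun _ : n => (1 : α)) := by
    ext i j; simp [onesMatrix, replicateCol, replicateRow, mul_apply]
  rw [this, det_one_add_replicateCol_mul_replicateRow]
  simp [dotProduct, mul_comm]

end onesMatrix

theorem simplexGram_eq_one_add_onesMatrix (n : ℕ) : simplexGram n = 1 + onesMatrix _ _ ℚ := by
  ext i j
  by_cases h : i = j <;> simp [simplexGram, onesMatrix, one_apply, h]
  norm_num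

theorem simplexGram_eq_reindex_fromBlocks {a b c : ℕ} (e : Fin a ⊕ Fin b ≃ Fin c) :
    simplexGram c = reindex e e (fromBlocks (simplexGram a) (onesMatrix _ _ ℚ)
      (onesMatrix _ _ ℚ) (simplexGram b)) := by
  ext i j
  obtain ⟨x, rfl⟩ := e.surjective i
  obtain ⟨y, rfl⟩ := e.surjective j
  rcases x with x | x <;> rcases y with y | y <;> simp [simplexGram, onesMatrix]

theorem transpose_mul_fromBlocks_simplexGram_mul {n m : ℕ} {s b : ℚ}
    (h₁ : s * (n + 1) + 1 + b * m = 0) (h₂ : s ^ 2 * (n + 1) + 2 * b + b ^ 2 * m = 0) :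
    (fromBlocks 1 (s • onesMatrix _ _ ℚ) 0 (1 + b • onesMatrix _ _ ℚ))ᵀ *
        fromBlocks (simplexGram n) (onesMatrix _ _ ℚ) (onesMatrix _ _ ℚ) (simplexGram m) *
        fromBlocks 1 (s • onesMatrix (Fin n) (Fin m) ℚ) 0 (1 + b • onesMatrix _ _ ℚ) =
      fromBlocks (simplexGram n) 0 0 1 := by
  simp only [simplexGram_eq_one_add_onesMatrix, fromBlocks_transpose, transpose_one,
    transpose_zero, transpose_add, transpose_smul, transpose_onesMatrix, fromBlocks_multiply,
    Matrix.mul_add, Matrix.add_mul, Matrix.smul_mul, Matrix.mul_smul, onesMatrix_mul_onesMatrix,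
    Matrix.one_mul, Matrix.mul_one, Matrix.mul_zero, Matrix.zero_mul, add_zero,
    smul_smul, smul_add, Fintype.card_fin]
  refine fromBlocks_inj.mpr ⟨?_, ?_, ?_, ?_⟩ <;> ext i j <;>
    simp only [Matrix.add_apply, Matrix.smul_apply, Matrix.zero_apply, one_apply, onesMatrix,
      of_apply, smul_eq_mul, mul_one]
  · linear_combination h₁
  · linear_combination h₁
  · linear_combination (1 + b * m + s * (n - 1)) * h₁ + h₂

theorem exists_transpose_mul_fromBlocks_simplexGram_mul {n m : ℕ} {r : ℚ} (hr : 0 < r)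
    (hrm : r ^ 2 * (n + 1) = n + m + 1) :
    ∃ P : Matrix (Fin n ⊕ Fin m) (Fin n ⊕ Fin m) ℚ, IsUnit P.det ∧
      Pᵀ * fromBlocks (simplexGram n) (onesMatrix _ _ ℚ) (onesMatrix _ _ ℚ) (simplexGram m) * P =
        fromBlocks (simplexGram n) 0 0 1 := by
  set s : ℚ := -1 / (r * (n + 1))
  set b : ℚ := -1 / (r * (r + 1) * (n + 1))
  have h₁ : s * (n + 1) + 1 + b * m = 0 := by
    have hm : (m : ℚ) = (r - 1) * (r + 1) * (n + 1) := by linear_combination -hrm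
    simp only [s, b, hm]
    field_simp
    ring
  have h₂ : s ^ 2 * (n + 1) + 2 * b + b ^ 2 * m = 0 := by
    simp only [s, b]
    field_simp
    linear_combination -hrm
  refine ⟨_, ?_, transpose_mul_fromBlocks_simplexGram_mul h₁ h₂⟩
  rw [det_fromBlocks_zero₂₁, det_one, one_mul, det_one_add_smul_onesMatrix, Fintype.card_fin,
    isUnit_iff_ne_zero]
  have hs : s * (n + 1) = -r⁻¹ := by
    simp only [s]
    field_simp
  have hdet : 1 + b * m = r⁻¹ := by linear_combination h₁ - hs
  exact hdet ▸ (inv_pos.mpr hr).ne'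

/-- If `sf (d+1) = sf (d'+1)` and `d ≤ d'`, then `A_{d'} ≃ A_d ⊥ (d'-d)·⟨1⟩` over `ℚ`. -/
theorem simplexGram_stable (d d' : ℕ) (hdd' : d ≤ d')
    (hsf : ∀ s : ℕ, Squarefree s →
      ((∃ u : ℕ, d + 1 = s * u ^ 2) ↔ (∃ u : ℕ, d' + 1 = s * u ^ 2))) :
    ∃ P : Matrix (Fin d') (Fin d') ℚ, IsUnit P.det ∧
      P.transpose * simplexGram d' * P =
        Matrix.reindex (finSumFinEquiv.trans (finCongr (by omega)))
          (finSumFinEquiv.trans (finCongr (by omega)))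
          (Matrix.fromBlocks (simplexGram d) 0 0 (1 : Matrix (Fin (d' - d)) (Fin (d' - d)) ℚ)) := by
  obtain ⟨r, hr, hrd⟩ := exists_rat_sq_mul_eq_of_squarefree_part_eq
    (Nat.succ_pos d) (Nat.succ_pos d') hsf
  obtain ⟨P, hP, hPG⟩ := exists_transpose_mul_fromBlocks_simplexGram_mul (n := d) (m := d' - d) hr
    (by push_cast [Nat.cast_sub hdd'] at hrd ⊢; linear_combination hrd)
  set e : Fin d ⊕ Fin (d' - d) ≃ Fin d' := finSumFinEquiv.trans (finCongr (by omega))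
  refine ⟨reindex e e P, by rwa [det_reindex_self], ?_⟩
  rw [simplexGram_eq_reindex_fromBlocks e, ← hPG, reindex_apply, reindex_apply, reindex_apply,
    transpose_submatrix, submatrix_mul_equiv, submatrix_mul_equiv]
end
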